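/- Let r ∈ {l,u}. If x̄ is a local ⪯ʳ_K-weakly minimal solution of the set optimization problem min_{x∈Ω} F(x), then x̄ is a local solution of the scalar problem min_{x∈Ω} f_{r,x̄}(x), i.e., there is a neighborhood U of x̄ with f_{r,x̄}(x̄) ≤ f_{r,x̄}(x) for all x ∈ Ω ∩ U. -/

import Mathlib

open Set Topology Metric Pointwise

/-- The Gerstewitz (Tammer) scalarizing functional `Ψ_e(y) = inf {t : y ∈ t•e - K}`. -/
noncomputable def psiE {Y : Type*} [NormedAddCommGroup Y] [NormedSpace ℝ Y]
    (K : Set Y) (e : Y) (y : Y) : ℝ :=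
  sInf {t : ℝ | t • e - y ∈ K}

/-- The lower inner function `g_l(x,z) = inf_{y ∈ F x} Ψ_e (y - z)` (with values in `EReal`). -/
noncomputable def glow {X Y : Type*} [NormedAddCommGroup X] [NormedSpace ℝ X]
    [NormedAddCommGroup Y] [NormedSpace ℝ Y]
    (K : Set Y) (e : Y) (F : X → Set Y) (x : X) (z : Y) : EReal :=
  ⨅ y ∈ F x, (psiE K e (y - z) : EReal)

/-- The upper inner function `g_{u,x̄}(y) = inf_{ȳ ∈ F x̄} Ψ_e (y - ȳ)`. -/
noncomputable def gupp {X Y : Type*} [NormedAddCommGroup X] [NormedSpace ℝ X]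
    [NormedAddCommGroup Y] [NormedSpace ℝ Y]
    (K : Set Y) (e : Y) (F : X → Set Y) (xbar : X) (y : Y) : EReal :=
  ⨅ yb ∈ F xbar, (psiE K e (y - yb) : EReal)

/-- The lower scalarizing functional `f_{l,x̄}(x) = sup_{ȳ ∈ F x̄} g_l(x, ȳ)`. -/
noncomputable def flow {X Y : Type*} [NormedAddCommGroup X] [NormedSpace ℝ X]
    [NormedAddCommGroup Y] [NormedSpace ℝ Y]
    (K : Set Y) (e : Y) (F : X → Set Y) (xbar : X) (x : X) : EReal :=
  ⨆ yb ∈ F xbar, glow K e F x yb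

/-- The upper scalarizing functional `f_{u,x̄}(x) = sup_{y ∈ F x} g_{u,x̄}(y)`. -/
noncomputable def fupp {X Y : Type*} [NormedAddCommGroup X] [NormedSpace ℝ X]
    [NormedAddCommGroup Y] [NormedSpace ℝ Y]
    (K : Set Y) (e : Y) (F : X → Set Y) (xbar : X) (x : X) : EReal :=
  ⨆ y ∈ F x, gupp K e F xbar y

/-- Weakly minimal elements: `WMin(A,K) = {a ∈ A : (a - int K) ∩ A = ∅}`. -/
def wMinSet {Y : Type*} [NormedAddCommGroup Y] (A K : Set Y) : Set Y :=
  {a ∈ A | ∀ b ∈ A, a - b ∉ interior K}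

/-- Weakly maximal elements: `WMax(A,K) = {a ∈ A : (a + int K) ∩ A = ∅}`. -/
def wMaxSet {Y : Type*} [NormedAddCommGroup Y] (A K : Set Y) : Set Y :=
  {a ∈ A | ∀ b ∈ A, b - a ∉ interior K}

/-- Minimal elements: `Min(A,K) = {a ∈ A : (a - K) ∩ A = {a}}`. -/
def minSet {Y : Type*} [AddGroup Y] (A K : Set Y) : Set Y :=
  {a ∈ A | ∀ b ∈ A, a - b ∈ K → b = a}

/-!
Since `0 ∈ K`, `Ψ_e(0) ≤ 0` and hence `f_{r,x̄}(x̄) ≤ 0`. Conversely, `Ψ_e(w) < 0` gives some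
`t < 0` with `t • e - w ∈ K`, so `-w = (-t) • e + (t • e - w) ∈ int K + K ⊆ int K`; unwinding the
sup-inf, `f_{r,x̄}(x) < 0` forces `F x ≺ʳ_K F x̄`. Local weak minimality thus rules out negative
values of `f_{r,x̄}` near `x̄`.
-/

section ConvexCone

variable {Y : Type*} [AddCommGroup Y] [Module ℝ Y] {K : Set Y}

theorem add_mem_of_convex_cone (hKcv : Convex ℝ K)
    (hKcone : ∀ t : ℝ, 0 ≤ t → ∀ y ∈ K, t • y ∈ K) {a b : Y} (ha : a ∈ K) (hb : b ∈ K) :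
    a + b ∈ K := by
  have hmid : (1 / 2 : ℝ) • a + (1 / 2 : ℝ) • b ∈ K :=
    hKcv ha hb (by norm_num) (by norm_num) (by norm_num)
  simpa [smul_add, smul_smul] using hKcone 2 zero_le_two _ hmid

theorem add_mem_interior_of_convex_cone [TopologicalSpace Y] [IsTopologicalAddGroup Y]
    (hKcv : Convex ℝ K) (hKcone : ∀ t : ℝ, 0 ≤ t → ∀ y ∈ K, t • y ∈ K) {a b : Y}
    (ha : a ∈ interior K) (hb : b ∈ K) : a + b ∈ interior K := by
  refine interior_maximal ?_ isOpen_interior.add_right (add_mem_add ha hb)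
  rintro _ ⟨a', ha', b', hb', rfl⟩
  exact add_mem_of_convex_cone hKcv hKcone (interior_subset ha') hb'

theorem smul_mem_interior_of_cone [TopologicalSpace Y] [ContinuousConstSMul ℝ Y]
    (hKcone : ∀ t : ℝ, 0 ≤ t → ∀ y ∈ K, t • y ∈ K) {t : ℝ} (ht : 0 < t) {a : Y}
    (ha : a ∈ interior K) : t • a ∈ interior K := by
  refine interior_maximal ?_ (isOpen_interior.smul₀ ht.ne') (smul_mem_smul_set ha)
  rintro _ ⟨a', ha', rfl⟩
  exact hKcone t ht.le a' (interior_subset ha')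

end ConvexCone

section Gerstewitz

variable {Y : Type*} [NormedAddCommGroup Y] [NormedSpace ℝ Y] {K : Set Y} {e : Y}

theorem psiE_zero_nonpos (h0 : (0 : Y) ∈ K) : psiE K e 0 ≤ 0 := by
  by_cases hbdd : BddBelow {t : ℝ | t • e - 0 ∈ K}
  · exact csInf_le hbdd (by simpa using h0)
  · exact (Real.sInf_of_not_bddBelow hbdd).le

theorem exists_neg_smul_sub_mem_of_psiE_neg {w : Y} (hw : psiE K e w < 0) :
    ∃ t : ℝ, t < 0 ∧ t • e - w ∈ K := by
  by_contra! h
  exact hw.not_ge (Real.sInf_nonneg fun t ht => not_lt.1 fun htneg => h t htneg ht)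

theorem neg_mem_interior_of_psiE_neg (hKcv : Convex ℝ K)
    (hKcone : ∀ t : ℝ, 0 ≤ t → ∀ y ∈ K, t • y ∈ K) (he : e ∈ interior K) {w : Y}
    (hw : psiE K e w < 0) : -w ∈ interior K := by
  obtain ⟨t, ht, htK⟩ := exists_neg_smul_sub_mem_of_psiE_neg hw
  have hsplit : (-t) • e + (t • e - w) = -w := by module
  exact hsplit ▸ add_mem_interior_of_convex_cone hKcv hKcone
    (smul_mem_interior_of_cone hKcone (neg_pos.2 ht) he) htK

theorem mem_add_interior_of_iInf_psiE_neg (hKcv : Convex ℝ K)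
    (hKcone : ∀ t : ℝ, 0 ≤ t → ∀ y ∈ K, t • y ∈ K) (he : e ∈ interior K) {A : Set Y}
    {b : Y} (h : ⨅ a ∈ A, (psiE K e (a - b) : EReal) < 0) : b ∈ A + interior K := by
  simp only [iInf_lt_iff] at h
  obtain ⟨a, ha, hlt⟩ := h
  refine ⟨a, ha, b - a, ?_, add_sub_cancel a b⟩
  simpa using neg_mem_interior_of_psiE_neg hKcv hKcone he (EReal.coe_lt_coe_iff.1 hlt)

theorem mem_sub_interior_of_iInf_psiE_neg (hKcv : Convex ℝ K)
    (hKcone : ∀ t : ℝ, 0 ≤ t → ∀ y ∈ K, t • y ∈ K) (he : e ∈ interior K) {B : Set Y}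
    {a : Y} (h : ⨅ b ∈ B, (psiE K e (a - b) : EReal) < 0) : a ∈ B - interior K := by
  simp only [iInf_lt_iff] at h
  obtain ⟨b, hb, hlt⟩ := h
  refine ⟨b, hb, b - a, ?_, sub_sub_cancel b a⟩
  simpa using neg_mem_interior_of_psiE_neg hKcv hKcone he (EReal.coe_lt_coe_iff.1 hlt)

end Gerstewitz

section Scalarization

variable {X Y : Type*} [NormedAddCommGroup X] [NormedSpace ℝ X]
  [NormedAddCommGroup Y] [NormedSpace ℝ Y] {K : Set Y} {e : Y} {F : X → Set Y} {xbar : X}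

theorem flow_self_nonpos (h0 : (0 : Y) ∈ K) : flow K e F xbar xbar ≤ 0 :=
  iSup₂_le fun yb hyb => (iInf₂_le yb hyb).trans <| by
    rw [sub_self]
    exact_mod_cast psiE_zero_nonpos h0

theorem fupp_self_nonpos (h0 : (0 : Y) ∈ K) : fupp K e F xbar xbar ≤ 0 :=
  iSup₂_le fun y hy => (iInf₂_le y hy).trans <| by
    rw [sub_self]
    exact_mod_cast psiE_zero_nonpos h0

theorem subset_add_interior_of_flow_neg (hKcv : Convex ℝ K)
    (hKcone : ∀ t : ℝ, 0 ≤ t → ∀ y ∈ K, t • y ∈ K) (he : e ∈ interior K) {x : X}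
    (hx : flow K e F xbar x < 0) : F xbar ⊆ F x + interior K := fun yb hyb =>
  mem_add_interior_of_iInf_psiE_neg hKcv hKcone he
    ((le_iSup₂ (f := fun yb _ => glow K e F x yb) yb hyb).trans_lt hx)

theorem subset_sub_interior_of_fupp_neg (hKcv : Convex ℝ K)
    (hKcone : ∀ t : ℝ, 0 ≤ t → ∀ y ∈ K, t • y ∈ K) (he : e ∈ interior K) {x : X}
    (hx : fupp K e F xbar x < 0) : F x ⊆ F xbar - interior K := fun y hy =>
  mem_sub_interior_of_iInf_psiE_neg hKcv hKcone he
    ((le_iSup₂ (f := fun y _ => gupp K e F xbar y) y hy).trans_lt hx)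

end Scalarization

theorem exists_nhds_le_of_nonpos_of_neg_imp {X β : Type*} [TopologicalSpace X] [LinearOrder β]
    [Zero β] {f : X → β} {P : X → Prop} {Ω : Set X} {xbar : X} (hself : f xbar ≤ 0)
    (hneg : ∀ x, f x < 0 → P x) (hmin : ∃ U ∈ 𝓝 xbar, ∀ x ∈ Ω ∩ U, x ≠ xbar → ¬ P x) :
    ∃ U ∈ 𝓝 xbar, ∀ x ∈ Ω ∩ U, f xbar ≤ f x := by
  obtain ⟨U, hU, hUmin⟩ := hmin
  refine ⟨U, hU, fun x hx => ?_⟩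
  rcases eq_or_ne x xbar with rfl | hne
  · exact le_rfl
  · exact hself.trans (not_lt.1 fun hlt => hUmin x hx hne (hneg x hlt))

theorem stmt18_general
    {X Y : Type*} [NormedAddCommGroup X] [NormedSpace ℝ X]
    [NormedAddCommGroup Y] [NormedSpace ℝ Y]
    (K : Set Y) (e : Y) (F : X → Set Y) (Ω : Set X) (xbar : X)
    (hKcv : Convex ℝ K)
    (hKcone : ∀ t : ℝ, 0 ≤ t → ∀ y ∈ K, t • y ∈ K)
    (he : e ∈ interior K) :
    ((∃ U ∈ 𝓝 xbar, ∀ x ∈ Ω ∩ U, x ≠ xbar → ¬ (F xbar ⊆ F x + interior K)) →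
      ∃ U ∈ 𝓝 xbar, ∀ x ∈ Ω ∩ U, flow K e F xbar xbar ≤ flow K e F xbar x) ∧
    ((∃ U ∈ 𝓝 xbar, ∀ x ∈ Ω ∩ U, x ≠ xbar → ¬ (F x ⊆ F xbar - interior K)) →
      ∃ U ∈ 𝓝 xbar, ∀ x ∈ Ω ∩ U, fupp K e F xbar xbar ≤ fupp K e F xbar x) := by
  have h0 : (0 : Y) ∈ K := by simpa using hKcone 0 le_rfl e (interior_subset he)
  exact ⟨exists_nhds_le_of_nonpos_of_neg_imp (flow_self_nonpos h0)
      fun _ => subset_add_interior_of_flow_neg hKcv hKcone he,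
    exists_nhds_le_of_nonpos_of_neg_imp (fupp_self_nonpos h0)
      fun _ => subset_sub_interior_of_fupp_neg hKcv hKcone he⟩

/-- if x̄ is a local ⪯ʳ_K-weakly minimal solution of the set optimization
problem (r ∈ {l,u}), then x̄ is a local solution of the scalar problem min_{x ∈ Ω} f_{r,x̄}. -/
theorem stmt18
    {X Y : Type*} [NormedAddCommGroup X] [NormedSpace ℝ X] [CompleteSpace X]
    [NormedAddCommGroup Y] [NormedSpace ℝ Y] [CompleteSpace Y]
    (K : Set Y) (e : Y) (F : X → Set Y) (Ω : Set X) (xbar : X)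
    (hKcl : IsClosed K) (hKcv : Convex ℝ K)
    (hKcone : ∀ t : ℝ, 0 ≤ t → ∀ y ∈ K, t • y ∈ K)
    (hKpt : K ∩ (-K) = {0})
    (he : e ∈ interior K)
    (hΩne : Ω.Nonempty) (hΩcl : IsClosed Ω)
    (hΩdom : Ω ⊆ interior {x | (F x).Nonempty})
    (hxΩ : xbar ∈ Ω) :
    ((∃ U ∈ 𝓝 xbar, ∀ x ∈ Ω ∩ U, x ≠ xbar → ¬ (F xbar ⊆ F x + interior K)) →
      ∃ U ∈ 𝓝 xbar, ∀ x ∈ Ω ∩ U, flow K e F xbar xbar ≤ flow K e F xbar x) ∧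
    ((∃ U ∈ 𝓝 xbar, ∀ x ∈ Ω ∩ U, x ≠ xbar → ¬ (F x ⊆ F xbar - interior K)) →
      ∃ U ∈ 𝓝 xbar, ∀ x ∈ Ω ∩ U, fupp K e F xbar xbar ≤ fupp K e F xbar x) :=
  stmt18_general K e F Ω xbar hKcv hKcone he
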